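/- Let K ⊂ ℝ² be a bounded open connected set whose boundary ∂K is the union of finitely many closed line segments [v₁,v₂], [v₂,v₃], …, [v_N, v₁] joining the vertices v₁, …, v_N ∈ ℝ², and let V₁(K) be the real vector space of functions v : closure(K) → ℝ that are continuous on closure(K), twice differentiable on K with ∂²v/∂x₁² + ∂²v/∂x₂² = 0 on K, and whose restriction to each closed boundary segment is an affine function of the arc parameter. Then the dofi–dofi bilinear form S(v,w) = Σ_{i=1}^N v(v_i) w(v_i) is a symmetric positive definite bilinear form on V₁(K): S is symmetric, S(v,v) ≥ 0 for all v ∈ V₁(K), and S(v,v) = 0 implies v ≡ 0. -/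

import Mathlib

/-!
A function of `V₁(K)` whose vertex values vanish is affine on each edge with zero endpoint values,
hence vanishes on `∂K`; being harmonic, it then vanishes on the closure by the weak maximum
principle applied to `f` and `-f`.

The maximum principle is proved by perturbation: `f + ε‖x‖²` has Laplacian at least
`2ε · dim > 0`, so by the second derivative test it has no interior local maximum. Its maximum over
the compact closure is therefore attained on `∂K`, where it is at most `ε · sup ‖x‖²`; let `ε → 0`.
-/

/-- Membership in the lowest order local virtual element space on the polygon with vertices
`v 0, …, v N`: continuous on the closure of `K`, twice differentiable and harmonic in `K`, and
affine (in the arc parameter) on each closed boundary edge. -/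
def MemV1 {N : ℕ} (K : Set (EuclideanSpace ℝ (Fin 2)))
    (v : Fin (N + 1) → EuclideanSpace ℝ (Fin 2)) (f : EuclideanSpace ℝ (Fin 2) → ℝ) : Prop :=
  ContinuousOn f (closure K) ∧
  (∃ (f' : EuclideanSpace ℝ (Fin 2) → EuclideanSpace ℝ (Fin 2) →L[ℝ] ℝ)
      (f'' : EuclideanSpace ℝ (Fin 2) →
        EuclideanSpace ℝ (Fin 2) →L[ℝ] EuclideanSpace ℝ (Fin 2) →L[ℝ] ℝ),
    ∀ x ∈ K, HasFDerivAt f (f' x) x ∧ HasFDerivAt f' (f'' x) x ∧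
      f'' x (EuclideanSpace.single 0 1) (EuclideanSpace.single 0 1)
        + f'' x (EuclideanSpace.single 1 1) (EuclideanSpace.single 1 1) = 0) ∧
  (∀ i : Fin (N + 1), ∃ a b : ℝ, ∀ t ∈ Set.Icc (0 : ℝ) 1,
    f ((1 - t) • v i + t • v (i + 1)) = a * t + b)

open Filter Topology

theorem IsLocalMax.deriv_deriv_nonpos {f : ℝ → ℝ} {a : ℝ} (h : IsLocalMax f a)
    (hc : ContinuousAt f a) : deriv (deriv f) a ≤ 0 := by
  by_contra! hpos
  -- by the second derivative test `a` is also a local minimum, so `f` is locally constant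
  have hconst : f =ᶠ[𝓝 a] fun _ => f a :=
    (h.and (isLocalMin_of_deriv_deriv_pos hpos h.deriv_eq_zero hc)).mono
      fun _ hx => le_antisymm hx.1 hx.2
  have hderiv : deriv f =ᶠ[𝓝 a] fun _ => 0 :=
    hconst.eventuallyEq_nhds.mono fun x hx => by rw [hx.deriv_eq, deriv_const]
  rw [hderiv.deriv_eq, deriv_const] at hpos
  exact hpos.false

theorem IsLocalMax.hessian_apply_self_nonpos {E : Type*} [NormedAddCommGroup E] [NormedSpace ℝ E]
    {g : E → ℝ} {g' : E → E →L[ℝ] ℝ} {g'' : E →L[ℝ] E →L[ℝ] ℝ} {x₀ : E}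
    (h : IsLocalMax g x₀) (hg : ∀ᶠ x in 𝓝 x₀, HasFDerivAt g (g' x) x)
    (hg' : HasFDerivAt g' g'' x₀) (u : E) : g'' u u ≤ 0 := by
  let line : ℝ → E := fun t => x₀ + t • u
  have hline (t : ℝ) : HasDerivAt line u t :=
    .const_add x₀ (by simpa using (hasDerivAt_id t).smul_const u)
  have hline0 : line 0 = x₀ := by simp [line]
  have hcont : Continuous line := by fun_prop
  rw [← hline0] at h hg hg'
  have hderiv : deriv (g ∘ line) =ᶠ[𝓝 0] fun t => g' (line t) u :=
    (hcont.continuousAt.eventually hg).mono fun t ht => (ht.comp_hasDerivAt t (hline t)).deriv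
  have hderiv2 : HasDerivAt (fun t => g' (line t) u) (g'' u u) 0 := by
    simpa using (hg'.comp_hasDerivAt 0 (hline 0)).clm_apply (hasDerivAt_const 0 u)
  have hc : ContinuousAt (g ∘ line) 0 :=
    hg.self_of_nhds.continuousAt.comp hcont.continuousAt
  simpa [hderiv.deriv_eq, hderiv2.deriv] using
    (h.comp_continuous hcont.continuousAt).deriv_deriv_nonpos hc

section MaximumPrinciple

variable {E : Type*} [NormedAddCommGroup E] [InnerProductSpace ℝ E] {ι : Type*} [Fintype ι]

def HasNonnegLaplacianOn (b : OrthonormalBasis ι ℝ E) (K : Set E) (f : E → ℝ) : Prop :=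
  ∃ (f' : E → E →L[ℝ] ℝ) (f'' : E → E →L[ℝ] E →L[ℝ] ℝ),
    ∀ x ∈ K, HasFDerivAt f (f' x) x ∧ HasFDerivAt f' (f'' x) x ∧ 0 ≤ ∑ i, f'' x (b i) (b i)

variable [Nonempty ι] {b : OrthonormalBasis ι ℝ E} {K : Set E} {f : E → ℝ}

theorem HasNonnegLaplacianOn.not_isLocalMax_add_norm_sq (hf : HasNonnegLaplacianOn b K f)
    (hK : IsOpen K) {ε : ℝ} (hε : 0 < ε) {x₀ : E} (hx₀ : x₀ ∈ K) :
    ¬IsLocalMax (fun x => f x + ε * ‖x‖ ^ 2) x₀ := by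
  obtain ⟨f', f'', hf⟩ := hf
  let B : E →L[ℝ] E →L[ℝ] ℝ := ε • 2 • innerSL ℝ
  have hg : ∀ᶠ x in 𝓝 x₀, HasFDerivAt (fun x => f x + ε * ‖x‖ ^ 2) (f' x + B x) x :=
    eventually_of_mem (hK.mem_nhds hx₀) fun x hx =>
      (hf x hx).1.add ((hasStrictFDerivAt_norm_sq x).hasFDerivAt.const_mul ε)
  have hg' : HasFDerivAt (fun x => f' x + B x) (f'' x₀ + B) x₀ :=
    (hf x₀ hx₀).2.1.add B.hasFDerivAt
  have hB (i : ι) : B (b i) (b i) = 2 * ε := by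
    change ε • 2 • inner ℝ (b i) (b i) = 2 * ε
    rw [real_inner_self_eq_norm_sq, b.orthonormal.1 i]
    simp only [one_pow, smul_eq_mul, nsmul_eq_mul]
    ring
  intro hmax
  have hsum : ∑ i, (f'' x₀ + B) (b i) (b i) ≤ 0 :=
    Finset.sum_nonpos fun i _ => hmax.hessian_apply_self_nonpos hg hg' (b i)
  simp only [add_apply, hB, Finset.sum_add_distrib, Finset.sum_const,
    Finset.card_univ, nsmul_eq_mul] at hsum
  have hcard : (0 : ℝ) < Fintype.card ι := by exact_mod_cast Fintype.card_pos
  nlinarith [(hf x₀ hx₀).2.2]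

theorem HasNonnegLaplacianOn.nonpos_of_frontier_nonpos (hf : HasNonnegLaplacianOn b K f)
    (hK : IsOpen K) (hKb : Bornology.IsBounded K) (hfc : ContinuousOn f (closure K))
    (hfr : ∀ x ∈ frontier K, f x ≤ 0) : ∀ x ∈ closure K, f x ≤ 0 := by
  have : FiniteDimensional ℝ E := b.toBasis.finiteDimensional_of_finite
  have hcpt : IsCompact (closure K) := hKb.isCompact_closure
  obtain ⟨C, hC⟩ : ∃ C, ∀ x ∈ closure K, ‖x‖ ^ 2 ≤ C :=
    (hcpt.bddAbove_image (by fun_prop : Continuous fun x : E => ‖x‖ ^ 2).continuousOn).imp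
      fun C hC x hx => hC ⟨x, hx, rfl⟩
  have hbound : ∀ ε > 0, ∀ x ∈ closure K, f x ≤ ε * C := by
    intro ε hε x hx
    have hpert : Continuous fun x : E => ε * ‖x‖ ^ 2 := by fun_prop
    obtain ⟨x₀, hx₀, hmax⟩ := hcpt.exists_isMaxOn ⟨x, hx⟩ (hfc.add hpert.continuousOn)
    have hx₀K : x₀ ∉ K := fun hx₀K => hf.not_isLocalMax_add_norm_sq hK hε hx₀K
      (hmax.isLocalMax (mem_of_superset (hK.mem_nhds hx₀K) subset_closure))
    have hx₀fr : x₀ ∈ frontier K := ⟨hx₀, by rwa [hK.interior_eq]⟩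
    calc f x ≤ f x + ε * ‖x‖ ^ 2 := by simp only [le_add_iff_nonneg_right]; positivity
      _ ≤ f x₀ + ε * ‖x₀‖ ^ 2 := hmax hx
      _ ≤ ε * C := by nlinarith [hfr x₀ hx₀fr, hC x₀ hx₀]
  intro x hx
  have hlim : Tendsto (fun ε : ℝ => ε * C) (𝓝[>] 0) (𝓝 0) :=
    ((continuous_mul_const C).tendsto' 0 0 (zero_mul C)).mono_left nhdsWithin_le_nhds
  exact ge_of_tendsto hlim (eventually_mem_nhdsWithin.mono fun ε hε => hbound ε hε x hx)

end MaximumPrinciple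

section VirtualElementSpace

variable {N : ℕ} {K : Set (EuclideanSpace ℝ (Fin 2))} {v : Fin (N + 1) → EuclideanSpace ℝ (Fin 2)}
  {f : EuclideanSpace ℝ (Fin 2) → ℝ}

theorem MemV1.neg (hf : MemV1 K v f) : MemV1 K v (-f) := by
  obtain ⟨hfc, ⟨f', f'', hder⟩, hedge⟩ := hf
  refine ⟨hfc.neg, ⟨-f', -f'', fun x hx => ?_⟩, fun i => ?_⟩
  · obtain ⟨h1, h2, hlap⟩ := hder x hx
    refine ⟨h1.neg, h2.neg, ?_⟩
    simp only [Pi.neg_apply, neg_apply]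
    linarith
  · obtain ⟨a, c, hac⟩ := hedge i
    exact ⟨-a, -c, fun t ht => by rw [Pi.neg_apply, hac t ht]; ring⟩

theorem MemV1.hasNonnegLaplacianOn (hf : MemV1 K v f) :
    HasNonnegLaplacianOn (EuclideanSpace.basisFun (Fin 2) ℝ) K f := by
  obtain ⟨f', f'', hder⟩ := hf.2.1
  refine ⟨f', f'', fun x hx => ⟨(hder x hx).1, (hder x hx).2.1, ?_⟩⟩
  simp [Fin.sum_univ_two, (hder x hx).2.2]

theorem MemV1.eq_zero_on_frontier (hf : MemV1 K v f)
    (hbdry : frontier K ⊆ ⋃ i : Fin (N + 1), segment ℝ (v i) (v (i + 1)))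
    (hvert : ∀ i, f (v i) = 0) : ∀ x ∈ frontier K, f x = 0 := by
  intro x hx
  obtain ⟨i, hxi⟩ := Set.mem_iUnion.mp (hbdry hx)
  obtain ⟨t, ht, rfl⟩ := (segment_eq_image ℝ (v i) (v (i + 1))).subset hxi
  obtain ⟨a, c, hac⟩ := hf.2.2 i
  have h0 := hac 0 (by simp)
  have h1 := hac 1 (by simp)
  simp only [sub_zero, one_smul, zero_smul, add_zero, zero_add, sub_self, mul_zero,
    mul_one, hvert] at h0 h1
  rw [hac t ht, ← h0, show a = 0 by linarith]
  ring

theorem MemV1.eq_zero_on_closure (hf : MemV1 K v f) (hK : IsOpen K)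
    (hKb : Bornology.IsBounded K) (hfr : ∀ x ∈ frontier K, f x = 0) :
    ∀ x ∈ closure K, f x = 0 := fun x hx =>
  le_antisymm
    (hf.hasNonnegLaplacianOn.nonpos_of_frontier_nonpos hK hKb hf.1 (fun y hy => (hfr y hy).le) x hx)
    (neg_nonpos.mp (hf.neg.hasNonnegLaplacianOn.nonpos_of_frontier_nonpos hK hKb hf.neg.1
      (fun y hy => by simp [hfr y hy]) x hx))

end VirtualElementSpace

theorem stmt_13_general (N : ℕ) (K : Set (EuclideanSpace ℝ (Fin 2)))
    (hKopen : IsOpen K) (hKbd : Bornology.IsBounded K)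
    (v : Fin (N + 1) → EuclideanSpace ℝ (Fin 2))
    (hbdry : frontier K = ⋃ i : Fin (N + 1), segment ℝ (v i) (v (i + 1)))
    (f g : EuclideanSpace ℝ (Fin 2) → ℝ)
    (hf : MemV1 K v f) :
    (∑ i, f (v i) * g (v i) = ∑ i, g (v i) * f (v i)) ∧
    (0 ≤ ∑ i, f (v i) * f (v i)) ∧
    ((∑ i, f (v i) * f (v i)) = 0 → ∀ x ∈ closure K, f x = 0) := by
  refine ⟨Finset.sum_congr rfl fun i _ => mul_comm _ _,
    Finset.sum_nonneg fun i _ => mul_self_nonneg _, fun hsum => ?_⟩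
  have hvert (i : Fin (N + 1)) : f (v i) = 0 :=
    mul_self_eq_zero.mp ((Finset.sum_eq_zero_iff_of_nonneg fun j _ => mul_self_nonneg _).mp hsum i
      (Finset.mem_univ i))
  exact hf.eq_zero_on_closure hKopen hKbd (hf.eq_zero_on_frontier hbdry.subset hvert)

/-- The dofi–dofi form `S(f,g) = Σᵢ f(vᵢ) g(vᵢ)` is symmetric and positive definite on the
lowest order local virtual element space of a bounded open connected polygon `K`. -/
theorem stmt_13 (N : ℕ) (K : Set (EuclideanSpace ℝ (Fin 2)))
    (hKopen : IsOpen K) (hKbd : Bornology.IsBounded K) (hKconn : IsConnected K)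
    (v : Fin (N + 1) → EuclideanSpace ℝ (Fin 2))
    (hbdry : frontier K = ⋃ i : Fin (N + 1), segment ℝ (v i) (v (i + 1)))
    (f g : EuclideanSpace ℝ (Fin 2) → ℝ)
    (hf : MemV1 K v f) (hg : MemV1 K v g) :
    (∑ i, f (v i) * g (v i) = ∑ i, g (v i) * f (v i)) ∧
    (0 ≤ ∑ i, f (v i) * f (v i)) ∧
    ((∑ i, f (v i) * f (v i)) = 0 → ∀ x ∈ closure K, f x = 0) :=
  stmt_13_general N K hKopen hKbd v hbdry f g hf
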